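/- arXiv:1510.02808 — 2 statements merged into one kernel-verified Lean document; each statement's English description precedes it below -/
import Mathlib

section
/- Suppose the market weight sequence {μ(t)} ⊂ Δ_n satisfies Assumption (M), Θ ⊂ L^∞(Δ_n, Δ̄_n) is totally bounded in the supremum metric, and the asymptotic growth rate W(π) = lim_{t→∞} (1/t) log V_π(t) exists for every π ∈ Θ. Then the convergence is uniform over Θ: lim_{t→∞} sup_{π ∈ Θ} | (1/t) log V_π(t) − W(π) | = 0. -/
open MeasureTheory Filter Topology Finset
open scoped UniformConvergence ENNReal

noncomputable section

/-- The open unit simplex in `ℝⁿ`. -/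
def oS (n : ℕ) : Set (Fin n → ℝ) := {p | (∀ i, 0 < p i) ∧ ∑ i, p i = 1}

/-- The closed unit simplex in `ℝⁿ`. -/
def cS (n : ℕ) : Set (Fin n → ℝ) := {p | (∀ i, 0 ≤ p i) ∧ ∑ i, p i = 1}

/-- Relative value of a (time-dependent) weight sequence `w` along market path `μ`. -/
def relV {n : ℕ} (μ w : ℕ → Fin n → ℝ) : ℕ → ℝ
  | 0 => 1
  | t + 1 => relV μ w t * ∑ i, w t i * (μ (t + 1) i / μ t i)

/-- Relative value of a portfolio map. -/
def pV {n : ℕ} (μ : ℕ → ↥(oS n)) (π : ↥(oS n) → ↥(cS n)) : ℕ → ℝ :=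
  relV (fun t => (μ t : Fin n → ℝ)) (fun t => (π (μ t) : Fin n → ℝ))

/-- Assumption (M): relative returns bounded between `1/M` and `M`. -/
def AssumptionM {n : ℕ} (M : ℝ) (μ : ℕ → ↥(oS n)) : Prop :=
  ∀ t i, 1 / M ≤ (μ (t + 1) : Fin n → ℝ) i / (μ t : Fin n → ℝ) i ∧
    (μ (t + 1) : Fin n → ℝ) i / (μ t : Fin n → ℝ) i ≤ M

/-- Normalized wealth distribution `ν_t(B) = (∫_B V dν₀)/(∫ V dν₀)`. -/
def wd {T : Type*} [MeasurableSpace T] (ν0 : Measure T) (V : T → ℝ) : Measure T :=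
  (ν0.withDensity (fun x => ENNReal.ofReal (V x)) Set.univ)⁻¹ •
    ν0.withDensity fun x => ENNReal.ofReal (V x)

/-- Portfolio maps `Δₙ → Δ̄ₙ` with the topology (uniformity) of uniform convergence,
i.e. of the supremum metric. -/
abbrev PMap (n : ℕ) := ↥(oS n) →ᵤ ↥(cS n)

instance {n : ℕ} : MeasurableSpace (PMap n) := borel _


/-!
Under (M) every one-period return `∑ i, π_i(μ(s)) μ_i(s+1)/μ_i(s)` is a weighted mean of numbers
in `[1/M, M]`, so it stays in `[1/M, M]`. Since `log` is `M`-Lipschitz on `[1/M, ∞)`, each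
one-period log-return is `n M²`-Lipschitz in `π` for the supremum metric, and `log V_π(t)` is the
sum of `t` of them. Hence the growth rates `π ↦ (1/t) log V_π(t)` are `n M²`-Lipschitz uniformly
in `t`. A uniformly equicontinuous sequence that converges pointwise on a totally bounded set
converges uniformly there: compare with a finite net (an `ε/3` argument).
-/

section UniformConvergence

variable {ι α β : Type*} [UniformSpace α] [UniformSpace β]

theorem UniformEquicontinuous.tendstoUniformly_of_tendsto {F : ι → α → β} {f : α → β}
    {p : Filter ι} (hF : UniformEquicontinuous F) (hα : TotallyBounded (Set.univ : Set α))
    (hf : ∀ x, Tendsto (F · x) p (𝓝 (f x))) : TendstoUniformly F f p := by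
  rcases p.eq_or_neBot with rfl | hp
  · exact fun _ _ => eventually_bot
  intro U hU
  obtain ⟨V, hV, hVsymm, hVU⟩ := comp_comp_symm_mem_uniformity_sets hU
  obtain ⟨C, ⟨hC, hCclosed⟩, hCV⟩ := uniformity_hasBasis_closed.mem_iff.mp hV
  obtain ⟨net, hnet, hcover⟩ := hα _ (hF C hC)
  -- the pointwise limit inherits the modulus of equicontinuity because `C` is closed
  have hf_close : ∀ x y, (∀ i, (F i x, F i y) ∈ C) → (f x, f y) ∈ C := fun x y hxy =>
    hCclosed.mem_of_tendsto ((hf x).prodMk_nhds (hf y)) (Eventually.of_forall hxy)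
  have hnet_close : ∀ᶠ i in p, ∀ y ∈ net, (f y, F i y) ∈ V :=
    (hnet.eventually_all).mpr fun y _ => hf y (mem_nhds_left (f y) hV)
  filter_upwards [hnet_close] with i hi x
  obtain ⟨y, hy, hxy⟩ := Set.mem_iUnion₂.mp (hcover (Set.mem_univ x))
  exact hVU <| SetRel.prodMk_mem_comp
    (SetRel.prodMk_mem_comp (hCV (hf_close x y hxy)) (hi y hy)) (SetRel.symm V (hCV (hxy i)))

end UniformConvergence

theorem TendstoUniformly.tendsto_iSup_abs_sub {ι α : Type*} {F : ι → α → ℝ} {f : α → ℝ}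
    {p : Filter ι} (h : TendstoUniformly F f p) :
    Tendsto (fun i => ⨆ x, |F i x - f x|) p (𝓝 0) := by
  rw [Metric.tendsto_nhds]
  intro ε hε
  filter_upwards [Metric.tendstoUniformly_iff.mp h (ε / 2) (half_pos hε)] with i hi
  have hle : ⨆ x, |F i x - f x| ≤ ε / 2 :=
    Real.iSup_le (fun x => by rw [abs_sub_comm]; exact (hi x).le) (half_pos hε).le
  rw [Real.dist_eq, sub_zero, abs_of_nonneg (Real.iSup_nonneg fun _ => abs_nonneg _)]
  linarith

theorem Real.abs_log_sub_log_le {a b c : ℝ} (hc : 0 < c) (ha : c ≤ a) (hb : c ≤ b) :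
    |Real.log a - Real.log b| ≤ |a - b| / c := by
  wlog hab : b ≤ a generalizing a b
  · rw [abs_sub_comm, abs_sub_comm a]
    exact this hb ha (le_of_not_ge hab)
  have ha0 : 0 < a := hc.trans_le ha
  have hb0 : 0 < b := hc.trans_le hb
  rw [abs_of_nonneg (sub_nonneg.mpr (Real.log_le_log hb0 hab)), abs_of_nonneg (sub_nonneg.mpr hab),
    ← Real.log_div ha0.ne' hb0.ne']
  calc Real.log (a / b) ≤ a / b - 1 := Real.log_le_sub_one_of_pos (by positivity)
    _ = (a - b) / b := by field_simp
    _ ≤ (a - b) / c := div_le_div_of_nonneg_left (sub_nonneg.mpr hab) hc hb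

theorem le_sum_mul_of_mem_cS {n : ℕ} {w r : Fin n → ℝ} {a : ℝ} (hw : w ∈ cS n)
    (hr : ∀ i, a ≤ r i) : a ≤ ∑ i, w i * r i :=
  calc a = ∑ i, w i * a := by rw [← Finset.sum_mul, hw.2, one_mul]
    _ ≤ ∑ i, w i * r i := Finset.sum_le_sum fun i _ => mul_le_mul_of_nonneg_left (hr i) (hw.1 i)

theorem lipschitzWith_log_sum_mul {n : ℕ} {M : ℝ} (hM : 0 < M) {r : Fin n → ℝ}
    (hr : ∀ i, 1 / M ≤ r i ∧ r i ≤ M) :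
    LipschitzWith (n * M ^ 2).toNNReal
      fun w : ↥(cS n) => Real.log (∑ i, (w : Fin n → ℝ) i * r i) := by
  have hr0 : ∀ i, 0 < r i := fun i => (one_div_pos.mpr hM).trans_le (hr i).1
  refine LipschitzWith.of_dist_le_mul fun w w' => ?_
  have hsum : |∑ i, (w : Fin n → ℝ) i * r i - ∑ i, (w' : Fin n → ℝ) i * r i| ≤ n * M * dist w w' :=
    calc |∑ i, (w : Fin n → ℝ) i * r i - ∑ i, (w' : Fin n → ℝ) i * r i|
        = |∑ i, ((w : Fin n → ℝ) i - (w' : Fin n → ℝ) i) * r i| := by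
          simp only [sub_mul, Finset.sum_sub_distrib]
      _ ≤ ∑ i, |((w : Fin n → ℝ) i - (w' : Fin n → ℝ) i) * r i| := Finset.abs_sum_le_sum_abs _ _
      _ ≤ ∑ _i : Fin n, dist w w' * M := Finset.sum_le_sum fun i _ => by
          have hwi : |(w : Fin n → ℝ) i - (w' : Fin n → ℝ) i| ≤ dist w w' := by
            simpa [Real.dist_eq, Subtype.dist_eq] using dist_le_pi_dist w.1 w'.1 i
          rw [abs_mul, abs_of_pos (hr0 i)]
          exact mul_le_mul hwi (hr i).2 (hr0 i).le dist_nonneg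
      _ = n * M * dist w w' := by
          rw [Finset.sum_const, Finset.card_univ, Fintype.card_fin, nsmul_eq_mul]; ring
  rw [Real.dist_eq, Real.coe_toNNReal _ (by positivity)]
  calc _ ≤ |∑ i, (w : Fin n → ℝ) i * r i - ∑ i, (w' : Fin n → ℝ) i * r i| / (1 / M) :=
        Real.abs_log_sub_log_le (one_div_pos.mpr hM) (le_sum_mul_of_mem_cS w.2 fun i => (hr i).1)
          (le_sum_mul_of_mem_cS w'.2 fun i => (hr i).1)
    _ ≤ n * M * dist w w' / (1 / M) := by gcongr
    _ = n * M ^ 2 * dist w w' := by field_simp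

section Portfolio

variable {n : ℕ} {M : ℝ} {μ : ℕ → ↥(oS n)}

variable (hAM : AssumptionM M μ)
include hAM

theorem one_div_le_sum_mul_returns (w : ↥(cS n)) (t : ℕ) :
    1 / M ≤ ∑ i, (w : Fin n → ℝ) i * ((μ (t + 1) : Fin n → ℝ) i / (μ t : Fin n → ℝ) i) :=
  le_sum_mul_of_mem_cS w.2 fun i => (hAM t i).1

variable (hM : 0 < M)
include hM

theorem pV_pos (π : ↥(oS n) → ↥(cS n)) (t : ℕ) : 0 < pV μ π t := by
  induction t with
  | zero => exact one_pos
  | succ t ih =>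
    exact mul_pos ih ((one_div_pos.mpr hM).trans_le (one_div_le_sum_mul_returns hAM _ t))

theorem log_pV_succ (π : ↥(oS n) → ↥(cS n)) (t : ℕ) :
    Real.log (pV μ π (t + 1)) = Real.log (pV μ π t) +
      Real.log (∑ i, (π (μ t) : Fin n → ℝ) i * ((μ (t + 1) : Fin n → ℝ) i / (μ t : Fin n → ℝ) i)) :=
  Real.log_mul (pV_pos hAM hM π t).ne'
    ((one_div_pos.mpr hM).trans_le (one_div_le_sum_mul_returns hAM _ t)).ne'

theorem lipschitzWith_log_pV (t : ℕ) :
    LipschitzWith (t * (n * M ^ 2).toNNReal)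
      fun π : PMap n => Real.log (pV μ (UniformFun.toFun π) t) := by
  induction t with
  | zero => simp [pV, relV]
  | succ t ih =>
    have hstep := (lipschitzWith_log_sum_mul hM (hAM t)).comp
      (UniformFun.lipschitzWith_eval (μ t))
    simp only [log_pV_succ hAM hM]
    rw [show ((t + 1 : ℕ) : NNReal) * (n * M ^ 2).toNNReal =
      t * (n * M ^ 2).toNNReal + (n * M ^ 2).toNNReal * 1 by push_cast; ring]
    exact ih.add hstep

theorem lipschitzWith_growthRate (t : ℕ) :
    LipschitzWith (n * M ^ 2).toNNReal
      fun π : PMap n => Real.log (pV μ (UniformFun.toFun π) t) / t := by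
  rcases Nat.eq_zero_or_pos t with rfl | ht
  · simp only [Nat.cast_zero, div_zero]
    exact (LipschitzWith.const 0).weaken zero_le
  simp_rw [div_eq_inv_mul]
  have hconst : ‖(t : ℝ)⁻¹‖₊ * (t * (n * M ^ 2).toNNReal) = (n * M ^ 2).toNNReal := by
    rw [nnnorm_inv, Real.nnnorm_natCast, inv_mul_cancel_left₀ (Nat.cast_ne_zero.mpr ht.ne')]
  rw [← hconst]
  exact (lipschitzWith_smul (t : ℝ)⁻¹).comp (lipschitzWith_log_pV hAM hM t)

end Portfolio

theorem stmt10_general {n : ℕ} (M : ℝ) (hM : 0 < M)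
    (μ : ℕ → ↥(oS n)) (hAM : AssumptionM M μ)
    (Θ : Set (PMap n)) (hTB : TotallyBounded Θ)
    (W : ↥Θ → ℝ)
    (hW : ∀ θ : ↥Θ, Tendsto (fun t : ℕ => Real.log (pV μ (UniformFun.toFun θ.1) t) / t)
      atTop (𝓝 (W θ))) :
    Tendsto (fun t : ℕ => ⨆ θ : ↥Θ, |Real.log (pV μ (UniformFun.toFun θ.1) t) / t - W θ|)
      atTop (𝓝 0) := by
  have hΘ : TotallyBounded (Set.univ : Set ↥Θ) := by
    simpa only [Subtype.coe_preimage_self] using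
      totallyBounded_preimage (isUniformEmbedding_subtype_val (p := (· ∈ Θ))).isUniformInducing hTB
  have hequi : UniformEquicontinuous
      fun (t : ℕ) (θ : ↥Θ) => Real.log (pV μ (UniformFun.toFun θ.1) t) / t :=
    LipschitzWith.uniformEquicontinuous _ _ fun t =>
      (lipschitzWith_growthRate hAM hM t).comp (LipschitzWith.subtype_val Θ)
  exact (hequi.tendstoUniformly_of_tendsto hΘ hW).tendsto_iSup_abs_sub

/-- Lemma 3.6: uniform convergence of growth rates over a totally
bounded family of portfolio maps. -/
theorem stmt10 {n : ℕ} (hn : 2 ≤ n) (M : ℝ) (hM : 0 < M)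
    (μ : ℕ → ↥(oS n)) (hAM : AssumptionM M μ)
    (Θ : Set (PMap n)) (hTB : TotallyBounded Θ)
    (W : ↥Θ → ℝ)
    (hW : ∀ θ : ↥Θ, Tendsto (fun t : ℕ => Real.log (pV μ (UniformFun.toFun θ.1) t) / t)
      atTop (𝓝 (W θ))) :
    Tendsto (fun t : ℕ => ⨆ θ : ↥Θ, |Real.log (pV μ (UniformFun.toFun θ.1) t) / t - W θ|)
      atTop (𝓝 0) :=
  stmt10_general M hM μ hAM Θ hTB W hW
end
end

section
/- Let n = 2, let E = {p ∈ Δ_2 : p_1, p_2 rational}, let Θ = (Δ̄_2)^E with the topology of pointwise convergence, and let ν_0 be the infinite product over E of the uniform distribution on Δ̄_2. Fix a rational δ > 0 and let the market weight path be μ(0) = (1/2, 1/2), μ(t+1) = ( μ_1(t)/(1 + δ μ_2(t)), (1+δ)μ_2(t)/(1 + δ μ_2(t)) ). Then Cover's portfolio satisfies V̂(t) = (μ_2(t)/μ_2(0)) · (1 − (1/2) δ/(1+δ))^t for all t, while V*(t) := sup_{π∈Θ} V_π(t) = μ_2(t)/μ_2(0) for t > 0; consequently lim_{t→∞} (1/t)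 log ( V̂(t)/V*(t) ) = log( 1 − (1/2) δ/(1+δ) ) < 0, so Cover's portfolio fails the universality property for this path even though the path satisfies Assumption (M) with M = 1 + δ. -/
open scoped Classical

open MeasureTheory Filter Topology Finset
open scoped ENNReal

noncomputable section

/-- The rational points of the open simplex `Δ₂`. -/
def Eq2 : Set ↥(oS 2) := {p | ∀ i, ∃ r : ℚ, (p : Fin 2 → ℝ) i = (r : ℝ)}

/-- The parametrization `x ↦ (x, 1−x)` of the closed simplex `Δ̄₂` by `[0,1]`. -/
def toSimplex2 (x : ℝ) : ↥(cS 2) :=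
  if h : x ∈ Set.Icc (0 : ℝ) 1 then
    ⟨fun i => if i = 0 then x else 1 - x, by
      refine ⟨fun i => ?_, ?_⟩
      · by_cases hi : i = 0
        · simpa [hi] using h.1
        · simp only [hi, if_false]
          linarith [h.2]
      · simp [Fin.sum_univ_two]⟩
  else
    ⟨fun i => if i = 0 then 1 else 0, by
      refine ⟨fun i => ?_, ?_⟩
      · by_cases hi : i = 0 <;> simp [hi]
      · simp [Fin.sum_univ_two]⟩

/-- The uniform distribution on the closed simplex `Δ̄₂`. -/
def unif2 : Measure ↥(cS 2) := Measure.map toSimplex2 (volume.restrict (Set.Icc 0 1))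

/-- Relative value of a portfolio map defined on the rational points of `Δ₂`. -/
def pVQ (μ : ℕ → ↥(oS 2)) (hr : ∀ t, μ t ∈ Eq2) (π : ↥Eq2 → ↥(cS 2)) : ℕ → ℝ :=
  relV (fun t => (μ t : Fin 2 → ℝ)) (fun t => (π ⟨μ t, hr t⟩ : Fin 2 → ℝ))


/-! Along this path asset 2 outperforms asset 1 in every period, so no portfolio map beats
holding asset 2, whose relative value is `μ₂(t)/μ₂(0)`. The path never revisits a point of `E`,
so under `ν₀` the weights `π(μ(0)), π(μ(1)), …` are independent uniform draws and the expected
relative value factorizes into per-period averages of the two asset returns,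
`(r₁ + r₂)/2 = r₂ (1 − δ/(2(1+δ)))`: Cover's portfolio loses this fixed factor against the best
map in every period. -/

lemma coe_toSimplex2 (x : ℝ) :
    (toSimplex2 x : Fin 2 → ℝ) = fun i =>
      if x ∈ Set.Icc (0 : ℝ) 1 then (if i = 0 then x else 1 - x)
      else (if i = 0 then 1 else 0) := by
  by_cases hx : x ∈ Set.Icc (0 : ℝ) 1 <;>
    simp only [toSimplex2, hx, dite_true, dite_false, if_true, if_false]

lemma measurable_toSimplex2 : Measurable toSimplex2 := by
  have hcoe : Measurable fun x => (toSimplex2 x : Fin 2 → ℝ) := by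
    simp_rw [coe_toSimplex2]
    exact measurable_pi_lambda _ fun i =>
      Measurable.ite measurableSet_Icc (by split_ifs <;> fun_prop) (by fun_prop)
  exact hcoe.subtype_mk

lemma measurable_sum_coe_mul {n : ℕ} (c : Fin n → ℝ) :
    Measurable fun q : ↥(cS n) => ∑ i, (q : Fin n → ℝ) i * c i :=
  Finset.measurable_sum _ fun i _ =>
    ((measurable_pi_apply i).comp measurable_subtype_coe).mul_const _

lemma integral_unif2 (c : Fin 2 → ℝ) :
    ∫ q : ↥(cS 2), ∑ i, (q : Fin 2 → ℝ) i * c i ∂unif2 = (c 0 + c 1) / 2 := by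
  have hline : ∀ x ∈ Set.Icc (0 : ℝ) 1,
      ∑ i, (toSimplex2 x : Fin 2 → ℝ) i * c i = c 1 + (c 0 - c 1) * x := by
    intro x hx
    simp only [coe_toSimplex2, hx, if_true, Fin.sum_univ_two, one_ne_zero, if_false]
    ring
  rw [unif2, integral_map measurable_toSimplex2.aemeasurable
      (measurable_sum_coe_mul c).aestronglyMeasurable,
    setIntegral_congr_fun measurableSet_Icc hline, integral_Icc_eq_integral_Ioc,
    ← intervalIntegral.integral_of_le zero_le_one,
    intervalIntegral.integral_add intervalIntegrable_const
      (intervalIntegral.intervalIntegrable_id.const_mul _),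
    intervalIntegral.integral_const, intervalIntegral.integral_const_mul, integral_id]
  norm_num
  ring

section ProductMeasure

variable {ι α : Type*} [MeasurableSpace α]

def IsProductMeasure (ν : Measure (ι → α)) (m : Measure α) : Prop :=
  ∀ (s : Finset ι) (B : ι → Set α), (∀ p, MeasurableSet (B p)) →
    ν {π : ι → α | ∀ p ∈ s, π p ∈ B p} = ∏ p ∈ s, m (B p)

variable {ν : Measure (ι → α)} {m : Measure α}

lemma IsProductMeasure.map_eval (h : IsProductMeasure ν m) (p : ι) :
    ν.map (fun π => π p) = m := by
  ext C hC
  rw [Measure.map_apply (measurable_pi_apply p) hC]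
  simpa [Set.preimage] using h {p} (fun _ => C) (fun _ => hC)

lemma IsProductMeasure.iIndepFun_eval (h : IsProductMeasure ν m) :
    ProbabilityTheory.iIndepFun (fun (p : ι) (π : ι → α) => π p) ν := by
  rw [ProbabilityTheory.iIndepFun_iff_measure_inter_preimage_eq_mul]
  intro S B hB
  have hB' : ∀ p, MeasurableSet (if p ∈ S then B p else Set.univ) := by
    intro p
    split_ifs with hp
    exacts [hB p hp, MeasurableSet.univ]
  have hcyl : ⋂ p ∈ S, (fun π : ι → α => π p) ⁻¹' B p =
      {π | ∀ p ∈ S, π p ∈ if p ∈ S then B p else Set.univ} := by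
    ext π
    simp +contextual
  rw [hcyl, h S _ hB']
  refine Finset.prod_congr rfl fun p hp => ?_
  rw [if_pos hp, ← h.map_eval p, Measure.map_apply (measurable_pi_apply p) (hB p hp)]

lemma IsProductMeasure.integral_prod_comp_eval (h : IsProductMeasure ν m) {P : ℕ → ι}
    (hP : Function.Injective P) {f : ℕ → α → ℝ} (hf : ∀ s, Measurable (f s)) (t : ℕ) :
    ∫ π, ∏ s ∈ range t, f s (π (P s)) ∂ν = ∏ s ∈ range t, ∫ x, f s x ∂m := by
  have hind := h.iIndepFun_eval.precomp (hP.comp (Fin.val_injective (n := t)))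
  have key := hind.integral_fun_prod_comp (f := fun s : Fin t => f s)
    (fun _ => (measurable_pi_apply _).aemeasurable) (fun s => (hf s).aestronglyMeasurable)
  have hmarg : ∀ s, ∫ π, f s (π (P s)) ∂ν = ∫ x, f s x ∂m := fun s => by
    rw [← h.map_eval (P s),
      integral_map (measurable_pi_apply _).aemeasurable (hf s).aestronglyMeasurable]
  have hrange (π : ι → α) : ∏ s ∈ range t, f s (π (P s)) = ∏ s : Fin t, f s (π (P s)) :=
    (Fin.prod_univ_eq_prod_range (fun s => f s (π (P s))) t).symm
  simp_rw [hrange, ← Fin.prod_univ_eq_prod_range (fun s => ∫ x, f s x ∂m) t]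
  simpa only [Function.comp_apply, hmarg] using key

end ProductMeasure

section RelativeValue

variable {n : ℕ}

def periodReturn (μ : ℕ → Fin n → ℝ) (t : ℕ) (q : Fin n → ℝ) : ℝ :=
  ∑ i, q i * (μ (t + 1) i / μ t i)

lemma relV_eq_prod (μ w : ℕ → Fin n → ℝ) (t : ℕ) :
    relV μ w t = ∏ s ∈ range t, periodReturn μ s (w s) := by
  induction t with
  | zero => rfl
  | succ t ih => rw [prod_range_succ, ← ih]; rfl

lemma periodReturn_nonneg {μ : ℕ → Fin n → ℝ} (hμ : ∀ t i, 0 < μ t i) (t : ℕ)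
    {q : Fin n → ℝ} (hq : q ∈ cS n) : 0 ≤ periodReturn μ t q :=
  sum_nonneg fun i _ => mul_nonneg (hq.1 i) (div_pos (hμ _ i) (hμ t i)).le

lemma periodReturn_le {μ : ℕ → Fin n → ℝ} {t : ℕ} {j : Fin n}
    (hj : ∀ i, μ (t + 1) i / μ t i ≤ μ (t + 1) j / μ t j) {q : Fin n → ℝ} (hq : q ∈ cS n) :
    periodReturn μ t q ≤ μ (t + 1) j / μ t j :=
  calc periodReturn μ t q ≤ ∑ i, q i * (μ (t + 1) j / μ t j) :=
        sum_le_sum fun i _ => mul_le_mul_of_nonneg_left (hj i) (hq.1 i)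
    _ = μ (t + 1) j / μ t j := by rw [← sum_mul, hq.2, one_mul]

def simplexVertex (j : Fin n) : ↥(cS n) :=
  ⟨Pi.single j 1, fun i => by by_cases h : i = j <;> simp [h], by simp⟩

lemma periodReturn_simplexVertex (μ : ℕ → Fin n → ℝ) (t : ℕ) (j : Fin n) :
    periodReturn μ t (simplexVertex j : Fin n → ℝ) = μ (t + 1) j / μ t j := by
  simp [periodReturn, simplexVertex, Pi.single_apply]

lemma prod_range_succ_div {f : ℕ → ℝ} (hf : ∀ t, f t ≠ 0) (t : ℕ) :
    ∏ s ∈ range t, f (s + 1) / f s = f t / f 0 := by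
  induction t with
  | zero => simp [hf 0]
  | succ t ih => rw [prod_range_succ, ih, mul_comm, div_mul_div_cancel₀ (hf t)]

end RelativeValue

section PortfolioMaps

variable {μ : ℕ → ↥(oS 2)} (hr : ∀ t, μ t ∈ Eq2)

theorem integral_pVQ (hμ : Function.Injective μ) {ν : Measure (↥Eq2 → ↥(cS 2))}
    (hν : IsProductMeasure ν unif2) (t : ℕ) :
    ∫ π, pVQ μ hr π t ∂ν = ∏ s ∈ range t,
      ((μ (s + 1) : Fin 2 → ℝ) 0 / (μ s : Fin 2 → ℝ) 0 +
        (μ (s + 1) : Fin 2 → ℝ) 1 / (μ s : Fin 2 → ℝ) 1) / 2 := by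
  have hP : Function.Injective fun s => (⟨μ s, hr s⟩ : ↥Eq2) :=
    fun s s' h => hμ (congrArg Subtype.val h)
  simp_rw [pVQ, relV_eq_prod]
  rw [hν.integral_prod_comp_eval hP
    (f := fun s q => periodReturn (fun t => (μ t : Fin 2 → ℝ)) s q)
    (fun s => measurable_sum_coe_mul _) t]
  simp_rw [periodReturn, integral_unif2]

theorem iSup_pVQ_of_ratio_le
    (hle : ∀ t, (μ (t + 1) : Fin 2 → ℝ) 0 / (μ t : Fin 2 → ℝ) 0 ≤
      (μ (t + 1) : Fin 2 → ℝ) 1 / (μ t : Fin 2 → ℝ) 1) (t : ℕ) :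
    ⨆ π, pVQ μ hr π t = (μ t : Fin 2 → ℝ) 1 / (μ 0 : Fin 2 → ℝ) 1 := by
  have hpos (t : ℕ) : ∀ i, 0 < (μ t : Fin 2 → ℝ) i := (μ t).2.1
  have hbest (s : ℕ) (i : Fin 2) : (μ (s + 1) : Fin 2 → ℝ) i / (μ s : Fin 2 → ℝ) i ≤
      (μ (s + 1) : Fin 2 → ℝ) 1 / (μ s : Fin 2 → ℝ) 1 := by
    fin_cases i
    exacts [hle s, le_rfl]
  have htel :=
    prod_range_succ_div (f := fun s => (μ s : Fin 2 → ℝ) 1) (fun s => (hpos s 1).ne') t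
  have hbound (π : ↥Eq2 → ↥(cS 2)) :
      pVQ μ hr π t ≤ (μ t : Fin 2 → ℝ) 1 / (μ 0 : Fin 2 → ℝ) 1 := by
    rw [pVQ, relV_eq_prod, ← htel]
    exact prod_le_prod (fun s _ => periodReturn_nonneg hpos s (π _).2)
      (fun s _ => periodReturn_le (hbest s) (π _).2)
  have hattain : pVQ μ hr (fun _ => simplexVertex 1) t =
      (μ t : Fin 2 → ℝ) 1 / (μ 0 : Fin 2 → ℝ) 1 := by
    rw [pVQ, relV_eq_prod, ← htel]
    simp_rw [periodReturn_simplexVertex]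
  have : Nonempty (↥Eq2 → ↥(cS 2)) := ⟨fun _ => simplexVertex 1⟩
  exact le_antisymm (ciSup_le hbound)
    (hattain ▸ le_ciSup ⟨_, Set.forall_mem_range.2 hbound⟩ _)

end PortfolioMaps

lemma coe_one_lt_one (p : ↥(oS 2)) : (p : Fin 2 → ℝ) 1 < 1 := by
  have hsum : (p : Fin 2 → ℝ) 0 + (p : Fin 2 → ℝ) 1 = 1 := by simpa using p.2.2
  linarith [p.2.1 0]

lemma one_le_one_add_mul_coe_one {δ : ℝ} (hδ : 0 ≤ δ) (p : ↥(oS 2)) :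
    1 ≤ 1 + δ * (p : Fin 2 → ℝ) 1 := by
  have := p.2.1 1
  nlinarith

lemma one_add_mul_coe_one_le {δ : ℝ} (hδ : 0 ≤ δ) (p : ↥(oS 2)) :
    1 + δ * (p : Fin 2 → ℝ) 1 ≤ 1 + δ := by
  nlinarith [coe_one_lt_one p]

-- Equivalently, `μ₂/μ₁` is multiplied by `1 + δ` in every period.
def IsDriftPath (δ : ℝ) (μ : ℕ → ↥(oS 2)) : Prop :=
  ∀ t, (μ (t + 1) : Fin 2 → ℝ) 0 = (μ t : Fin 2 → ℝ) 0 / (1 + δ * (μ t : Fin 2 → ℝ) 1) ∧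
    (μ (t + 1) : Fin 2 → ℝ) 1 = (1 + δ) * (μ t : Fin 2 → ℝ) 1 / (1 + δ * (μ t : Fin 2 → ℝ) 1)

namespace IsDriftPath

variable {δ : ℝ} {μ : ℕ → ↥(oS 2)}

lemma ratio_zero (h : IsDriftPath δ μ) (hδ : 0 ≤ δ) (t : ℕ) :
    (μ (t + 1) : Fin 2 → ℝ) 0 / (μ t : Fin 2 → ℝ) 0 = 1 / (1 + δ * (μ t : Fin 2 → ℝ) 1) := by
  have := (μ t).2.1 0
  have := one_le_one_add_mul_coe_one hδ (μ t)
  rw [(h t).1]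
  field_simp

lemma ratio_one (h : IsDriftPath δ μ) (hδ : 0 ≤ δ) (t : ℕ) :
    (μ (t + 1) : Fin 2 → ℝ) 1 / (μ t : Fin 2 → ℝ) 1 = (1 + δ) / (1 + δ * (μ t : Fin 2 → ℝ) 1) := by
  have := (μ t).2.1 1
  have := one_le_one_add_mul_coe_one hδ (μ t)
  rw [(h t).2]
  field_simp

lemma ratio_zero_le_ratio_one (h : IsDriftPath δ μ) (hδ : 0 ≤ δ) (t : ℕ) :
    (μ (t + 1) : Fin 2 → ℝ) 0 / (μ t : Fin 2 → ℝ) 0 ≤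
      (μ (t + 1) : Fin 2 → ℝ) 1 / (μ t : Fin 2 → ℝ) 1 := by
  have := one_le_one_add_mul_coe_one hδ (μ t)
  rw [h.ratio_zero hδ, h.ratio_one hδ]
  gcongr
  linarith

lemma injective (h : IsDriftPath δ μ) (hδ : 0 < δ) : Function.Injective μ := by
  have hmono : StrictMono fun t => (μ t : Fin 2 → ℝ) 1 := by
    refine strictMono_nat_of_lt_succ fun t => ?_
    have hratio : 1 < (μ (t + 1) : Fin 2 → ℝ) 1 / (μ t : Fin 2 → ℝ) 1 := by
      have := one_le_one_add_mul_coe_one hδ.le (μ t)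
      have := coe_one_lt_one (μ t)
      rw [h.ratio_one hδ.le, one_lt_div (by linarith)]
      nlinarith
    rwa [one_lt_div ((μ t).2.1 1)] at hratio
  exact Function.Injective.of_comp (f := fun p : ↥(oS 2) => (p : Fin 2 → ℝ) 1) hmono.injective

lemma assumptionM (h : IsDriftPath δ μ) (hδ : 0 ≤ δ) : AssumptionM (1 + δ) μ := by
  intro t i
  have hlo := one_le_one_add_mul_coe_one hδ (μ t)
  have hhi := one_add_mul_coe_one_le hδ (μ t)
  have hinv : 1 / (1 + δ) ≤ 1 := by rw [div_le_one (by linarith)]; linarith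
  fin_cases i
  · rw [Fin.zero_eta, h.ratio_zero hδ]
    exact ⟨one_div_le_one_div_of_le (by linarith) hhi,
      ((div_le_one (by linarith)).2 hlo).trans (by linarith)⟩
  · rw [Fin.mk_one, h.ratio_one hδ]
    exact ⟨hinv.trans ((one_le_div (by linarith)).2 hhi), div_le_self (by linarith) hlo⟩

lemma mean_ratio (h : IsDriftPath δ μ) (hδ : 0 ≤ δ) (t : ℕ) :
    ((μ (t + 1) : Fin 2 → ℝ) 0 / (μ t : Fin 2 → ℝ) 0 +
      (μ (t + 1) : Fin 2 → ℝ) 1 / (μ t : Fin 2 → ℝ) 1) / 2 =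
      (μ (t + 1) : Fin 2 → ℝ) 1 / (μ t : Fin 2 → ℝ) 1 * (1 - 1 / 2 * (δ / (1 + δ))) := by
  have := one_le_one_add_mul_coe_one hδ (μ t)
  rw [h.ratio_zero hδ, h.ratio_one hδ]
  field_simp
  ring

end IsDriftPath

lemma tendsto_log_mul_pow_div_self_div {A : ℕ → ℝ} (hA : ∀ t, A t ≠ 0) (c : ℝ) :
    Tendsto (fun t : ℕ => Real.log (A t * c ^ t / A t) / t) atTop (𝓝 (Real.log c)) := by
  refine tendsto_const_nhds.congr' ?_
  filter_upwards [eventually_ne_atTop 0] with t ht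
  rw [mul_div_cancel_left₀ _ (hA t), Real.log_pow,
    mul_div_cancel_left₀ _ (Nat.cast_ne_zero.2 ht)]

theorem stmt11_general (δ : ℚ) (hδ : 0 < δ)
    (μ : ℕ → ↥(oS 2)) (hr : ∀ t, μ t ∈ Eq2)
    (hrec : ∀ t,
      (μ (t + 1) : Fin 2 → ℝ) 0 =
        (μ t : Fin 2 → ℝ) 0 / (1 + (δ : ℝ) * (μ t : Fin 2 → ℝ) 1) ∧
      (μ (t + 1) : Fin 2 → ℝ) 1 =
        (1 + (δ : ℝ)) * (μ t : Fin 2 → ℝ) 1 / (1 + (δ : ℝ) * (μ t : Fin 2 → ℝ) 1))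
    (ν0 : Measure (↥Eq2 → ↥(cS 2)))
    (hprod : ∀ (s : Finset ↥Eq2) (B : ↥Eq2 → Set ↥(cS 2)),
      (∀ p, MeasurableSet (B p)) →
      ν0 {π : ↥Eq2 → ↥(cS 2) | ∀ p ∈ s, π p ∈ B p} = ∏ p ∈ s, unif2 (B p)) :
    AssumptionM (1 + (δ : ℝ)) μ ∧
    (∀ t : ℕ,
      (∫ π : ↥Eq2 → ↥(cS 2), pVQ μ hr π t ∂ν0) =
        ((μ t : Fin 2 → ℝ) 1 / (μ 0 : Fin 2 → ℝ) 1) *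
          (1 - (1 / 2) * ((δ : ℝ) / (1 + (δ : ℝ)))) ^ t) ∧
    (∀ t : ℕ, 0 < t →
      (⨆ π : ↥Eq2 → ↥(cS 2), pVQ μ hr π t) =
        (μ t : Fin 2 → ℝ) 1 / (μ 0 : Fin 2 → ℝ) 1) ∧
    Tendsto (fun t : ℕ =>
        Real.log ((∫ π : ↥Eq2 → ↥(cS 2), pVQ μ hr π t ∂ν0) /
          (⨆ π : ↥Eq2 → ↥(cS 2), pVQ μ hr π t)) / t)
      atTop (𝓝 (Real.log (1 - (1 / 2) * ((δ : ℝ) / (1 + (δ : ℝ)))))) ∧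
    Real.log (1 - (1 / 2) * ((δ : ℝ) / (1 + (δ : ℝ)))) < 0 := by
  have hδ' : (0 : ℝ) < δ := by exact_mod_cast hδ
  have hpath : IsDriftPath (δ : ℝ) μ := hrec
  have hpos (t : ℕ) : 0 < (μ t : Fin 2 → ℝ) 1 := (μ t).2.1 1
  have hV (t : ℕ) : ∫ π, pVQ μ hr π t ∂ν0 = ((μ t : Fin 2 → ℝ) 1 / (μ 0 : Fin 2 → ℝ) 1) *
      (1 - 1 / 2 * ((δ : ℝ) / (1 + δ))) ^ t := by
    rw [integral_pVQ hr (hpath.injective hδ') hprod, prod_congr rfl fun s _ =>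
      hpath.mean_ratio hδ'.le s, prod_mul_distrib, prod_const, card_range,
      prod_range_succ_div (fun s => (hpos s).ne')]
  have hVstar (t : ℕ) : ⨆ π, pVQ μ hr π t = (μ t : Fin 2 → ℝ) 1 / (μ 0 : Fin 2 → ℝ) 1 :=
    iSup_pVQ_of_ratio_le hr (hpath.ratio_zero_le_ratio_one hδ'.le) t
  have hfrac : (δ : ℝ) / (1 + δ) < 1 := (div_lt_one (by positivity)).2 (by linarith)
  have hfrac_pos : 0 < (δ : ℝ) / (1 + δ) := by positivity
  refine ⟨hpath.assumptionM hδ'.le, hV, fun t _ => hVstar t, ?_,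
    Real.log_neg (by linarith) (by linarith)⟩
  simp_rw [hV, hVstar]
  exact tendsto_log_mul_pow_div_self_div (fun t => (div_pos (hpos t) (hpos 0)).ne') _

/-- Proposition 3.8: failure of universality of Cover's portfolio for the
family `Θ = (Δ̄₂)^E` of all portfolio maps on the rational points `E` of `Δ₂`, with `ν₀` the
infinite product of uniform distributions, along the explicit market path
`μ(0) = (1/2, 1/2)`, `μ(t+1) = (μ₁(t)/(1+δμ₂(t)), (1+δ)μ₂(t)/(1+δμ₂(t)))`. -/
theorem stmt11 (δ : ℚ) (hδ : 0 < δ)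
    (μ : ℕ → ↥(oS 2)) (hr : ∀ t, μ t ∈ Eq2)
    (hμ0 : (μ 0 : Fin 2 → ℝ) 0 = 1 / 2 ∧ (μ 0 : Fin 2 → ℝ) 1 = 1 / 2)
    (hrec : ∀ t,
      (μ (t + 1) : Fin 2 → ℝ) 0 =
        (μ t : Fin 2 → ℝ) 0 / (1 + (δ : ℝ) * (μ t : Fin 2 → ℝ) 1) ∧
      (μ (t + 1) : Fin 2 → ℝ) 1 =
        (1 + (δ : ℝ)) * (μ t : Fin 2 → ℝ) 1 / (1 + (δ : ℝ) * (μ t : Fin 2 → ℝ) 1))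
    (ν0 : Measure (↥Eq2 → ↥(cS 2))) [IsProbabilityMeasure ν0]
    (hprod : ∀ (s : Finset ↥Eq2) (B : ↥Eq2 → Set ↥(cS 2)),
      (∀ p, MeasurableSet (B p)) →
      ν0 {π : ↥Eq2 → ↥(cS 2) | ∀ p ∈ s, π p ∈ B p} = ∏ p ∈ s, unif2 (B p)) :
    AssumptionM (1 + (δ : ℝ)) μ ∧
    (∀ t : ℕ,
      (∫ π : ↥Eq2 → ↥(cS 2), pVQ μ hr π t ∂ν0) =
        ((μ t : Fin 2 → ℝ) 1 / (μ 0 : Fin 2 → ℝ) 1) *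
          (1 - (1 / 2) * ((δ : ℝ) / (1 + (δ : ℝ)))) ^ t) ∧
    (∀ t : ℕ, 0 < t →
      (⨆ π : ↥Eq2 → ↥(cS 2), pVQ μ hr π t) =
        (μ t : Fin 2 → ℝ) 1 / (μ 0 : Fin 2 → ℝ) 1) ∧
    Tendsto (fun t : ℕ =>
        Real.log ((∫ π : ↥Eq2 → ↥(cS 2), pVQ μ hr π t ∂ν0) /
          (⨆ π : ↥Eq2 → ↥(cS 2), pVQ μ hr π t)) / t)
      atTop (𝓝 (Real.log (1 - (1 / 2) * ((δ : ℝ) / (1 + (δ : ℝ)))))) ∧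
    Real.log (1 - (1 / 2) * ((δ : ℝ) / (1 + (δ : ℝ)))) < 0 :=
  stmt11_general δ hδ μ hr hrec ν0 hprod
end
end
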